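/- Fix k, ν ∈ N with ν ≤ k and n ≥ 1, and let P_{k−ν} be an R_{0,m}-valued polynomial on R^m, homogeneous of degree k−ν, with ∂_x P_{k−ν} = 0 on R^m. With β_{k−ν}(s) = s for s even and β_{k−ν}(s) = 2(k−ν) + m + s − 1 for s odd, one has (1/2) ∂̄_x CK[ x^{ν+n} P_{k−ν}(x) ](x_0, x) = β_{k−ν}(ν+n) · CK[ x^{ν+n−1} P_{k−ν}(x) ](x_0, x) for all (x_0, x) ∈ R^{m+1}. -/

import Mathlib

noncomputable section

/-- The negative definite quadratic form `Q(v) = -‖v‖²` on `ℝ^m`. -/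
def Qf (m : ℕ) : QuadraticForm ℝ (Fin m → ℝ) :=
  QuadraticMap.weightedSumSquares ℝ (fun _ : Fin m => (-1 : ℝ))

/-- The real Clifford algebra `R_{0,m}`. -/
abbrev Cl (m : ℕ) := CliffordAlgebra (Qf m)

/-- The generators `e j` of `R_{0,m}`. -/
def e (m : ℕ) (j : Fin m) : Cl m := CliffordAlgebra.ι (Qf m) (Pi.single j 1)

/-- The vector `x ∈ ℝ^m` viewed as an element `Σ_j x_j e_j` of the Clifford algebra. -/
def clVec (m : ℕ) (x : Fin m → ℝ) : Cl m := CliffordAlgebra.ι (Qf m) x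

namespace Cl

variable {m : ℕ}

lemma Qf_single (m : ℕ) (i : Fin m) : Qf m (Pi.single i 1) = -1 := by
  simp [Qf, QuadraticMap.weightedSumSquares_apply, Pi.single_apply]

lemma e_sq (m : ℕ) (i : Fin m) : e m i * e m i = algebraMap ℝ _ (-1) := by
  rw [e, CliffordAlgebra.ι_sq_scalar, Qf_single]

lemma polar_single (m : ℕ) {i j : Fin m} (h : i ≠ j) :
    QuadraticMap.polar (Qf m) (Pi.single i 1) (Pi.single j 1) = 0 := by
  classical
  simp only [QuadraticMap.polar, Qf, QuadraticMap.weightedSumSquares_apply, smul_eq_mul]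
  rw [← Finset.sum_sub_distrib, ← Finset.sum_sub_distrib]
  apply Finset.sum_eq_zero
  intro k _
  rcases eq_or_ne k i with rfl | hki <;> rcases eq_or_ne k j with rfl | hkj <;>
    simp_all [Pi.single_apply]

lemma e_anticomm (m : ℕ) {i j : Fin m} (h : i ≠ j) :
    e m i * e m j = - (e m j * e m i) := by
  have := CliffordAlgebra.ι_mul_ι_add_swap (Q := Qf m) (Pi.single i 1) (Pi.single j 1)
  rw [polar_single m h] at this
  simp only [map_zero] at this
  rw [eq_neg_iff_add_eq_zero]
  exact this

/-- Ordered products of generators. -/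
def lprod (m : ℕ) (l : List (Fin m)) : Cl m := (l.map (e m)).prod

lemma lprod_nil : lprod m [] = 1 := rfl

lemma lprod_cons (i : Fin m) (l : List (Fin m)) :
    lprod m (i :: l) = e m i * lprod m l := by
  simp [lprod]

lemma lprod_append (l₁ l₂ : List (Fin m)) :
    lprod m (l₁ ++ l₂) = lprod m l₁ * lprod m l₂ := by
  simp [lprod]

lemma straighten (m : ℕ) : ∀ (l : List (Fin m)), l.Pairwise (· < ·) → ∀ i : Fin m,
    ∃ (c : ℝ) (l' : List (Fin m)), l'.Pairwise (· < ·) ∧ (∀ x ∈ l', x = i ∨ x ∈ l) ∧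
      e m i * lprod m l = c • lprod m l'
  | [], _, i => ⟨1, [i], by simp, by simp, by simp [lprod]⟩
  | j :: t, hs, i => by
    have ht : t.Pairwise (· < ·) := (List.pairwise_cons.mp hs).2
    have hjt : ∀ x ∈ t, j < x := (List.pairwise_cons.mp hs).1
    rcases lt_trichotomy i j with hij | rfl | hij
    · refine ⟨1, i :: j :: t, ?_, ?_, by simp [lprod_cons]⟩
      · exact List.pairwise_cons.mpr ⟨by
          intro x hx
          rcases List.mem_cons.mp hx with rfl | hx'
          · exact hij
          · exact hij.trans (hjt x hx'), hs⟩
      · intro x hx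
        rcases List.mem_cons.mp hx with rfl | hx'
        · exact Or.inl rfl
        · exact Or.inr hx'
    · refine ⟨-1, t, ht, fun x hx => Or.inr (List.mem_cons_of_mem _ hx), ?_⟩
      rw [lprod_cons, ← mul_assoc, e_sq]
      rw [Algebra.algebraMap_eq_smul_one, smul_mul_assoc, one_mul]
    · obtain ⟨c, l'', hs'', hmem'', heq''⟩ := straighten m t ht i
      refine ⟨-c, j :: l'', ?_, ?_, ?_⟩
      · refine List.pairwise_cons.mpr ⟨?_, hs''⟩
        intro x hx
        rcases hmem'' x hx with rfl | hxt
        · exact hij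
        · exact hjt x hxt
      · intro x hx
        rcases List.mem_cons.mp hx with rfl | hx'
        · exact Or.inr (List.mem_cons_self)
        · rcases hmem'' x hx' with rfl | h'
          · exact Or.inl rfl
          · exact Or.inr (List.mem_cons_of_mem _ h')
      · rw [lprod_cons, ← mul_assoc, e_anticomm m (ne_of_gt hij), neg_mul, mul_assoc, heq'',
          lprod_cons, mul_smul_comm, neg_smul]

/-- The finite spanning set of `R_{0,m}`: ordered products of distinct generators. -/
def basisProd (m : ℕ) (s : Finset (Fin m)) : Cl m := lprod m (s.sort (· ≤ ·))

lemma sorted_lprod_mem (l : List (Fin m)) (hl : l.Pairwise (· < ·)) :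
    lprod m l ∈ Submodule.span ℝ (Set.range (basisProd m)) := by
  classical
  have hnd : l.Nodup := hl.nodup
  have : basisProd m l.toFinset = lprod m l := by
    rw [basisProd, (List.toFinset_sort (· ≤ ·) hnd).mpr  (hl.imp le_of_lt)]
  exact this ▸ Submodule.subset_span ⟨l.toFinset, rfl⟩

lemma e_mul_mem (i : Fin m) {x : Cl m}
    (hx : x ∈ Submodule.span ℝ (Set.range (basisProd m))) :
    e m i * x ∈ Submodule.span ℝ (Set.range (basisProd m)) := by
  classical
  induction hx using Submodule.span_induction with
  | mem x hxg =>
      obtain ⟨s, rfl⟩ := hxg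
      have hsort : (s.sort (· ≤ ·)).Pairwise (· < ·) := (Finset.sortedLT_sort s).pairwise
      obtain ⟨c, l', hs', _, heq⟩ := straighten m _ hsort i
      rw [basisProd, heq]
      exact Submodule.smul_mem _ _ (sorted_lprod_mem l' hs')
  | zero => simpa using Submodule.zero_mem _
  | add a b _ _ ha hb => rw [mul_add]; exact Submodule.add_mem _ ha hb
  | smul c a _ ha => rw [mul_smul_comm]; exact Submodule.smul_mem _ _ ha

lemma lprod_mem (l : List (Fin m)) :
    lprod m l ∈ Submodule.span ℝ (Set.range (basisProd m)) := by
  induction l with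
  | nil => exact sorted_lprod_mem [] (by simp)
  | cons i t ih => rw [lprod_cons]; exact e_mul_mem i ih

lemma span_eq_top (m : ℕ) : Submodule.span ℝ (Set.range (basisProd m)) = ⊤ := by
  classical
  rw [eq_top_iff]
  rintro a -
  induction a using CliffordAlgebra.induction with
  | algebraMap r =>
      rw [Algebra.algebraMap_eq_smul_one]
      exact Submodule.smul_mem _ _ (lprod_mem [])
  | ι v =>
      have hv : (CliffordAlgebra.ι (Qf m)) v = ∑ j, v j • e m j := by
        have : v = ∑ j, Pi.single j (v j) := (Finset.univ_sum_single v).symm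
        conv_lhs => rw [this]
        rw [map_sum]
        refine Finset.sum_congr rfl fun j _ => ?_
        rw [e, ← map_smul]
        congr 1
        rw [← Pi.single_smul, smul_eq_mul, mul_one]
      rw [hv]
      refine Submodule.sum_mem _ fun j _ => Submodule.smul_mem _ _ ?_
      simpa [lprod, e] using lprod_mem [j]
  | mul a b ha hb =>
      have := Submodule.mul_mem_mul ha hb
      rw [Submodule.span_mul_span] at this
      refine Submodule.span_le.mpr ?_ this
      rintro x ⟨y, ⟨s, rfl⟩, z, ⟨t, rfl⟩, rfl⟩
      dsimp only
      rw [basisProd, basisProd, ← lprod_append]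
      exact lprod_mem _
  | add a b ha hb => exact Submodule.add_mem _ ha hb

instance (m : ℕ) : Module.Finite ℝ (Cl m) := by
  classical
  exact ⟨⟨Finset.univ.image (basisProd m), by
    rw [Finset.coe_image, Finset.coe_univ, Set.image_univ]
    exact span_eq_top m⟩⟩

instance instNACG (m : ℕ) : NormedAddCommGroup (Cl m) :=
  NormedAddCommGroup.induced (Cl m) (Fin (Module.finrank ℝ (Cl m)) → ℝ)
    ((Module.finBasis ℝ (Cl m)).equivFun.toLinearMap)
    (Module.finBasis ℝ (Cl m)).equivFun.injective

instance instNS (m : ℕ) : NormedSpace ℝ (Cl m) :=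
  NormedSpace.induced ℝ (Cl m) (Fin (Module.finrank ℝ (Cl m)) → ℝ)
    ((Module.finBasis ℝ (Cl m)).equivFun.toLinearMap)

end Cl


/-- An `R_{0,m}`-valued polynomial map on `ℝ^n`. -/
def IsPolynomialMap {n m : ℕ} (f : (Fin n → ℝ) → Cl m) : Prop :=
  ∃ c : (Fin n →₀ ℕ) →₀ Cl m, ∀ x, f x = c.sum fun d a => (∏ i, x i ^ d i) • a

/-- The Dirac operator `∂_x = Σ_j e_j ∂_{x_j}` on `ℝ^m` acting on `R_{0,m}`-valued functions. -/
def dirac (m : ℕ) (f : (Fin m → ℝ) → Cl m) (x : Fin m → ℝ) : Cl m :=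
  ∑ j, e m j * fderiv ℝ f x (Pi.single j 1)

/-- The generalized Cauchy–Riemann operator `∂_x = ∂_{x_0} + Σ_j e_j ∂_{x_j}` on
`ℝ^{m+1} = Fin (m+1) → ℝ`, where the coordinate `0` plays the role of `x_0` and the
coordinate `j.succ` the role of `x_j`. -/
def CauchyRiemann (m : ℕ) (f : (Fin (m + 1) → ℝ) → Cl m) (y : Fin (m + 1) → ℝ) : Cl m :=
  fderiv ℝ f y (Pi.single 0 1) + ∑ j, e m j * fderiv ℝ f y (Pi.single j.succ 1)

/-- The conjugate generalized Cauchy–Riemann operator `∂̄_x = ∂_{x_0} - Σ_j e_j ∂_{x_j}`. -/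
def CauchyRiemannBar (m : ℕ) (f : (Fin (m + 1) → ℝ) → Cl m) (y : Fin (m + 1) → ℝ) : Cl m :=
  fderiv ℝ f y (Pi.single 0 1) - ∑ j, e m j * fderiv ℝ f y (Pi.single j.succ 1)

/-- A function is monogenic in `ℝ^{m+1}` if it is continuously differentiable and is
annihilated by the generalized Cauchy–Riemann operator everywhere. -/
def Monogenic (m : ℕ) (f : (Fin (m + 1) → ℝ) → Cl m) : Prop :=
  ContDiff ℝ 1 f ∧ ∀ y, CauchyRiemann m f y = 0

/-- The Cauchy–Kovalevskaya extension
`CK[g](x_0, x) = Σ_j ((-x_0)^j / j!) (∂_x^j g)(x)` (a finite sum when `g` is polynomial). -/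
def CK (m : ℕ) (g : (Fin m → ℝ) → Cl m) (y : Fin (m + 1) → ℝ) : Cl m :=
  ∑ᶠ j : ℕ, (((-y 0) ^ j / (j.factorial : ℝ)) • (dirac m)^[j] g (Fin.tail y))

/-- The coefficients `β_k(n)`: `n` if `n` is even, `2k + m + n - 1` if `n` is odd. -/
def βc (k m n : ℕ) : ℕ := if Even n then n else 2 * k + m + n - 1

/-! For any `g` whose iterated Dirac derivatives are differentiable and eventually vanish,
`CK[g] = Σ_j (-x₀)^j / j! ∂_x^j g` is a finite sum, and differentiating it term by term gives
`∂_{x₀} CK[g] = -CK[∂_x g]` and `Σ_j e_j ∂_{x_j} CK[g] = CK[∂_x g]`, so `½ ∂̄ CK[g] = -CK[∂_x g]`.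

For `g = x^s P` with `P` monogenic and homogeneous of degree `l`, the Leibniz rule together with
`e_j x + x e_j = -2 x_j` gives `∂_x (x f) = -m f - 2 E f - x ∂_x f` (`E` the Euler operator),
and Euler's identity `E (x^s P) = (s + l) x^s P` turns this into the recursion
`∂_x (x^s P) = -β_l(s) x^{s-1} P`, because `β_l(s) + β_l(s+1) = 2l + m + 2s`.
As `β_l(0) = 0`, the iterates of `∂_x` kill `x^N P` after `N + 1` steps, and
`½ ∂̄ CK[x^N P] = -CK[∂_x (x^N P)] = β_l(N) CK[x^{N-1} P]`. -/

open Finset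

namespace Cl

variable {m : ℕ}

/-- `Cl m` carries only a normed-space structure, so the product rule goes through
multiplication as a continuous bilinear map. -/
def mulCLM (m : ℕ) : Cl m →L[ℝ] Cl m →L[ℝ] Cl m :=
  (LinearMap.mul ℝ (Cl m)).toContinuousBilinearMap

section ProductRule

variable {E : Type*} [NormedAddCommGroup E] [NormedSpace ℝ E] {f g : E → Cl m} {x : E}

lemma differentiableAt_mul (hf : DifferentiableAt ℝ f x) (hg : DifferentiableAt ℝ g x) :
    DifferentiableAt ℝ (fun y => f y * g y) x :=
  ((mulCLM m).hasFDerivAt_of_bilinear hf.hasFDerivAt hg.hasFDerivAt).differentiableAt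

lemma fderiv_mul_apply (hf : DifferentiableAt ℝ f x) (hg : DifferentiableAt ℝ g x) (v : E) :
    fderiv ℝ (fun y => f y * g y) x v = f x * fderiv ℝ g x v + fderiv ℝ f x v * g x := by
  have h := ((mulCLM m).hasFDerivAt_of_bilinear hf.hasFDerivAt hg.hasFDerivAt).fderiv
  change fderiv ℝ (fun y => mulCLM m (f y) (g y)) x v = _
  rw [h]
  simp [mulCLM]

end ProductRule

lemma hasFDerivAt_clVec (x : Fin m → ℝ) :
    HasFDerivAt (clVec m) (LinearMap.toContinuousLinearMap (CliffordAlgebra.ι (Qf m))) x :=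
  (LinearMap.toContinuousLinearMap (CliffordAlgebra.ι (Qf m))).hasFDerivAt

lemma polar_single_left (j : Fin m) (x : Fin m → ℝ) :
    QuadraticMap.polar (Qf m) (Pi.single j 1) x = -(2 * x j) := by
  simp only [QuadraticMap.polar, Qf, QuadraticMap.weightedSumSquares_apply, Pi.add_apply,
    smul_eq_mul, Pi.single_apply, add_mul, mul_add, sum_add_distrib, ite_mul, mul_ite]
  simp
  ring

lemma e_mul_clVec_add_clVec_mul_e (j : Fin m) (x : Fin m → ℝ) :
    e m j * clVec m x + clVec m x * e m j = algebraMap ℝ (Cl m) (-(2 * x j)) := by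
  rw [e, clVec, CliffordAlgebra.ι_mul_ι_add_swap, polar_single_left]

end Cl

theorem fderiv_apply_self_of_homogeneous {E F : Type*} [NormedAddCommGroup E] [NormedSpace ℝ E]
    [NormedAddCommGroup F] [NormedSpace ℝ F] {f : E → F} {x : E} {d : ℕ}
    (hf : DifferentiableAt ℝ f x) (hhom : ∀ t : ℝ, f (t • x) = t ^ d • f x) :
    fderiv ℝ f x x = (d : ℝ) • f x := by
  have hray : HasDerivAt (fun t : ℝ => f (t • x)) (fderiv ℝ f x x) 1 := by
    have := (one_smul ℝ x).symm ▸ hf.hasFDerivAt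
    simpa [Function.comp_def] using
      this.comp_hasDerivAt (1 : ℝ) ((hasDerivAt_id (1 : ℝ)).smul_const x)
  have hpow : HasDerivAt (fun t : ℝ => t ^ d • f x) ((d : ℝ) • f x) 1 := by
    simpa using (hasDerivAt_pow d (1 : ℝ)).smul_const (f x)
  exact (funext hhom ▸ hray).unique hpow

theorem fderiv_apply_eq_sum_single {m : ℕ} {F : Type*} [NormedAddCommGroup F] [NormedSpace ℝ F]
    (f : (Fin m → ℝ) → F) (x v : Fin m → ℝ) :
    fderiv ℝ f x v = ∑ j, v j • fderiv ℝ f x (Pi.single j 1) := by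
  conv_lhs => rw [pi_eq_sum_univ' v]
  simp [map_sum]

lemma IsPolynomialMap.differentiable {n m : ℕ} {f : (Fin n → ℝ) → Cl m}
    (hf : IsPolynomialMap f) : Differentiable ℝ f := by
  obtain ⟨c, hc⟩ := hf
  rw [funext hc]
  unfold Finsupp.sum
  fun_prop

section Dirac

variable {m : ℕ}

lemma dirac_const_smul (c : ℝ) (f : (Fin m → ℝ) → Cl m) : dirac m (c • f) = c • dirac m f := by
  ext x
  simp [dirac, fderiv_const_smul_field, smul_sum]

lemma iterate_dirac_const_smul (c : ℝ) (f : (Fin m → ℝ) → Cl m) (j : ℕ) :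
    (dirac m)^[j] (c • f) = c • (dirac m)^[j] f := by
  induction j with
  | zero => rfl
  | succ j ih =>
    rw [Function.iterate_succ_apply', ih, dirac_const_smul, ← Function.iterate_succ_apply' (dirac m)]

lemma dirac_zero : dirac m 0 = 0 := by
  simpa using dirac_const_smul (m := m) 0 0

lemma dirac_clVec_mul {f : (Fin m → ℝ) → Cl m} {x : Fin m → ℝ} (hf : DifferentiableAt ℝ f x) :
    dirac m (fun y => clVec m y * f y) x
      = -((m : ℝ) • f x) - (2 : ℝ) • fderiv ℝ f x x - clVec m x * dirac m f x := by
  have hterm (j : Fin m) : e m j * fderiv ℝ (fun y => clVec m y * f y) x (Pi.single j 1)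
      = -f x - (2 * x j) • fderiv ℝ f x (Pi.single j 1)
        - clVec m x * (e m j * fderiv ℝ f x (Pi.single j 1)) := by
    rw [Cl.fderiv_mul_apply (Cl.hasFDerivAt_clVec x).differentiableAt hf,
      (Cl.hasFDerivAt_clVec x).fderiv, LinearMap.coe_toContinuousLinearMap', ← e, mul_add,
      ← mul_assoc, ← mul_assoc, Cl.e_sq, eq_sub_of_add_eq (Cl.e_mul_clVec_add_clVec_mul_e j x)]
    simp only [Algebra.algebraMap_eq_smul_one, sub_mul, smul_mul_assoc, one_mul, mul_assoc]
    module
  simp only [dirac, hterm, sum_sub_distrib, sum_neg_distrib, sum_const, card_univ,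
    Fintype.card_fin, fderiv_apply_eq_sum_single f x x, smul_sum, mul_sum, smul_smul,
    ← Nat.cast_smul_eq_nsmul ℝ]

end Dirac

section CauchyKovalevskaya

variable {m : ℕ}

def ckCoeff (j : ℕ) (t : ℝ) : ℝ := (-t) ^ j / j.factorial

lemma differentiable_ckCoeff (j : ℕ) : Differentiable ℝ (ckCoeff j) := by
  unfold ckCoeff
  fun_prop

lemma deriv_ckCoeff_zero : deriv (ckCoeff 0) = 0 := by
  have h : ckCoeff 0 = fun _ => 1 := by ext; simp [ckCoeff]
  rw [h, deriv_const']
  rfl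

lemma deriv_ckCoeff_succ (j : ℕ) (t : ℝ) : deriv (ckCoeff (j + 1)) t = -ckCoeff j t := by
  have h : HasDerivAt (ckCoeff (j + 1)) ((j + 1 : ℕ) * (-t) ^ j * -1 / (j + 1).factorial) t :=
    ((hasDerivAt_id t).neg.pow (j + 1)).div_const _
  rw [h.deriv, ckCoeff, Nat.factorial_succ]
  push_cast
  field_simp

lemma CK_eq_sum {g : (Fin m → ℝ) → Cl m} {M N : ℕ} (hnil : (dirac m)^[M] g = 0) (hMN : M ≤ N)
    (y : Fin (m + 1) → ℝ) :
    CK m g y = ∑ j ∈ range N, ckCoeff j (y 0) • (dirac m)^[j] g (Fin.tail y) := by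
  apply finsum_eq_sum_of_support_subset
  intro j hj
  by_contra hjN
  have hMj : M ≤ j := hMN.trans (not_lt.mp (by simpa using hjN))
  apply hj
  dsimp only
  rw [← Nat.sub_add_cancel hMj, Function.iterate_add_apply, hnil,
    Function.iterate_fixed dirac_zero]
  simp

lemma CK_const_smul (c : ℝ) (g : (Fin m → ℝ) → Cl m) : CK m (c • g) = c • CK m g := by
  ext y
  simp [CK, iterate_dirac_const_smul, smul_finsum, smul_comm c]

def tailCLM (m : ℕ) : (Fin (m + 1) → ℝ) →L[ℝ] (Fin m → ℝ) :=
  LinearMap.toContinuousLinearMap (LinearMap.funLeft ℝ ℝ Fin.succ)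

@[simp] lemma tailCLM_apply (y : Fin (m + 1) → ℝ) : tailCLM m y = Fin.tail y := rfl

lemma hasFDerivAt_smul_tail {φ : ℝ → ℝ} {φ' : ℝ} {h : (Fin m → ℝ) → Cl m}
    {y : Fin (m + 1) → ℝ} (hφ : HasDerivAt φ φ' (y 0)) (hh : DifferentiableAt ℝ h (Fin.tail y)) :
    HasFDerivAt (fun z : Fin (m + 1) → ℝ => φ (z 0) • h (Fin.tail z))
      (φ (y 0) • (fderiv ℝ h (Fin.tail y)).comp (tailCLM m)
        + (φ' • ContinuousLinearMap.proj 0).smulRight (h (Fin.tail y))) y :=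
  (hφ.comp_hasFDerivAt y (ContinuousLinearMap.proj 0).hasFDerivAt).smul
    (hh.hasFDerivAt.comp y (tailCLM m).hasFDerivAt)

lemma CauchyRiemannBar_smul_tail {φ : ℝ → ℝ} {φ' : ℝ} {h : (Fin m → ℝ) → Cl m}
    {y : Fin (m + 1) → ℝ} (hφ : HasDerivAt φ φ' (y 0)) (hh : DifferentiableAt ℝ h (Fin.tail y)) :
    CauchyRiemannBar m (fun z => φ (z 0) • h (Fin.tail z)) y
      = φ' • h (Fin.tail y) - φ (y 0) • dirac m h (Fin.tail y) := by
  have tail_single_zero : Fin.tail (Pi.single 0 1 : Fin (m + 1) → ℝ) = 0 := by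
    ext i; simp [Fin.tail, Fin.succ_ne_zero]
  have tail_single_succ (k : Fin m) :
      Fin.tail (Pi.single k.succ 1 : Fin (m + 1) → ℝ) = Pi.single k 1 := by
    ext i; simp [Fin.tail, Pi.single_apply]
  simp [CauchyRiemannBar, dirac, (hasFDerivAt_smul_tail hφ hh).fderiv, tail_single_zero,
    tail_single_succ, smul_sum]

lemma CauchyRiemannBar_sum {ι : Type*} (s : Finset ι) {F : ι → (Fin (m + 1) → ℝ) → Cl m}
    {y : Fin (m + 1) → ℝ} (hF : ∀ i ∈ s, DifferentiableAt ℝ (F i) y) :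
    CauchyRiemannBar m (fun z => ∑ i ∈ s, F i z) y = ∑ i ∈ s, CauchyRiemannBar m (F i) y := by
  simp only [CauchyRiemannBar, fderiv_fun_sum hF, _root_.sum_apply, mul_sum, sum_sub_distrib]
  rw [sum_comm]

theorem half_CauchyRiemannBar_CK {M : ℕ} {g : (Fin m → ℝ) → Cl m}
    (hdiff : ∀ j, Differentiable ℝ ((dirac m)^[j] g)) (hnil : (dirac m)^[M] g = 0)
    (y : Fin (m + 1) → ℝ) :
    (1 / 2 : ℝ) • CauchyRiemannBar m (CK m g) y = -CK m (dirac m g) y := by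
  have hnil' : (dirac m)^[M] (dirac m g) = 0 := by
    rw [← Function.iterate_succ_apply, Function.iterate_succ_apply', hnil, dirac_zero]
  have hterm (j : ℕ) :
      CauchyRiemannBar m (fun z => ckCoeff j (z 0) • (dirac m)^[j] g (Fin.tail z)) y
        = deriv (ckCoeff j) (y 0) • (dirac m)^[j] g (Fin.tail y)
          - ckCoeff j (y 0) • (dirac m)^[j + 1] g (Fin.tail y) := by
    rw [CauchyRiemannBar_smul_tail (differentiable_ckCoeff j _).hasDerivAt (hdiff j _),
      Function.iterate_succ_apply']
  rw [funext (CK_eq_sum hnil M.le_succ), CK_eq_sum hnil' le_rfl,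
    CauchyRiemannBar_sum _ fun j _ =>
      (hasFDerivAt_smul_tail (differentiable_ckCoeff j _).hasDerivAt (hdiff j _)).differentiableAt]
  simp only [hterm, sum_sub_distrib]
  rw [sum_range_succ', sum_range_succ, Function.iterate_succ_apply (dirac m) M, hnil']
  simp [deriv_ckCoeff_succ, deriv_ckCoeff_zero, Function.iterate_succ_apply]
  module

end CauchyKovalevskaya

lemma βc_zero (l m : ℕ) : βc l m 0 = 0 := by simp [βc]

lemma βc_add_βc_succ (l m s : ℕ) : βc l m s + βc l m (s + 1) = 2 * l + m + 2 * s := by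
  rcases Nat.even_or_odd s with hs | hs
  · simp only [βc, hs, Nat.even_add_one, if_true, not_true, if_false]
    omega
  · simp only [βc, Nat.not_even_iff_odd.mpr hs, Nat.even_add_one, if_false, not_false_eq_true,
      if_true]
    obtain ⟨c, rfl⟩ := hs
    omega

section VecPowMul

variable {m l : ℕ} {P : (Fin m → ℝ) → Cl m}

def clVecPowMul (m : ℕ) (P : (Fin m → ℝ) → Cl m) (s : ℕ) : (Fin m → ℝ) → Cl m :=
  fun x => clVec m x ^ s * P x

lemma clVecPowMul_zero : clVecPowMul m P 0 = P := by
  ext x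
  simp [clVecPowMul]

lemma clVecPowMul_succ (s : ℕ) :
    clVecPowMul m P (s + 1) = fun x => clVec m x * clVecPowMul m P s x := by
  ext x
  simp [clVecPowMul, pow_succ', mul_assoc]

lemma clVecPowMul_smul (hhom : ∀ (t : ℝ) x, P (t • x) = t ^ l • P x) (s : ℕ) (t : ℝ)
    (x : Fin m → ℝ) : clVecPowMul m P s (t • x) = t ^ (s + l) • clVecPowMul m P s x := by
  simp only [clVecPowMul, clVec, map_smul, smul_pow, hhom, smul_mul_smul_comm, pow_add]

lemma differentiable_clVecPowMul (hP : Differentiable ℝ P) (s : ℕ) :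
    Differentiable ℝ (clVecPowMul m P s) := by
  induction s with
  | zero => rwa [clVecPowMul_zero]
  | succ s ih =>
    rw [clVecPowMul_succ]
    exact fun x => Cl.differentiableAt_mul (Cl.hasFDerivAt_clVec x).differentiableAt (ih x)

/-- At `s = 0` the truncated `0 - 1` is harmless because `βc l m 0 = 0`. -/
lemma βc_smul_clVec_mul_clVecPowMul_pred (s : ℕ) (x : Fin m → ℝ) :
    (βc l m s : ℝ) • (clVec m x * clVecPowMul m P (s - 1) x)
      = (βc l m s : ℝ) • clVecPowMul m P s x := by
  cases s with
  | zero => simp [βc_zero]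
  | succ s => rw [Nat.add_sub_cancel, clVecPowMul_succ]

lemma dirac_clVecPowMul (hP : Differentiable ℝ P) (hhom : ∀ (t : ℝ) x, P (t • x) = t ^ l • P x)
    (hmono : ∀ x, dirac m P x = 0) (s : ℕ) :
    dirac m (clVecPowMul m P s) = -(βc l m s : ℝ) • clVecPowMul m P (s - 1) := by
  induction s with
  | zero => ext x; simp [clVecPowMul_zero, hmono, βc_zero]
  | succ s ih =>
    ext x
    have hβ : (βc l m (s + 1) : ℝ) = 2 * l + m + 2 * s - βc l m s := by
      rw [eq_sub_iff_add_eq', ← Nat.cast_add, βc_add_βc_succ]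
      push_cast
      ring
    rw [clVecPowMul_succ, dirac_clVec_mul (differentiable_clVecPowMul hP s x),
      fderiv_apply_self_of_homogeneous (differentiable_clVecPowMul hP s x)
        (fun t => clVecPowMul_smul hhom s t x), ih, Pi.smul_apply, mul_smul_comm, neg_smul,
      βc_smul_clVec_mul_clVecPowMul_pred, Pi.smul_apply, Nat.add_sub_cancel, hβ]
    push_cast
    module

lemma iterate_dirac_clVecPowMul (hP : Differentiable ℝ P)
    (hhom : ∀ (t : ℝ) x, P (t • x) = t ^ l • P x) (hmono : ∀ x, dirac m P x = 0) (N j : ℕ) :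
    (dirac m)^[j] (clVecPowMul m P N)
      = (∏ i ∈ range j, -(βc l m (N - i) : ℝ)) • clVecPowMul m P (N - j) := by
  induction j with
  | zero => simp
  | succ j ih =>
    rw [Function.iterate_succ_apply', ih, dirac_const_smul, dirac_clVecPowMul hP hhom hmono,
      smul_smul, prod_range_succ, Nat.sub_sub]

theorem half_CauchyRiemannBar_CK_clVecPowMul (hP : Differentiable ℝ P)
    (hhom : ∀ (t : ℝ) x, P (t • x) = t ^ l • P x) (hmono : ∀ x, dirac m P x = 0) (N : ℕ)
    (y : Fin (m + 1) → ℝ) :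
    (1 / 2 : ℝ) • CauchyRiemannBar m (CK m (clVecPowMul m P N)) y
      = (βc l m N : ℝ) • CK m (clVecPowMul m P (N - 1)) y := by
  have hiter := iterate_dirac_clVecPowMul hP hhom hmono N
  have hdiff (j : ℕ) : Differentiable ℝ ((dirac m)^[j] (clVecPowMul m P N)) := by
    rw [hiter]
    exact (differentiable_clVecPowMul hP _).const_smul _
  have hnil : (dirac m)^[N + 1] (clVecPowMul m P N) = 0 := by
    rw [hiter, prod_eq_zero (self_mem_range_succ N) (by simp [βc_zero]), zero_smul]
  rw [half_CauchyRiemannBar_CK hdiff hnil, dirac_clVecPowMul hP hhom hmono, CK_const_smul,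
    Pi.smul_apply, neg_smul, neg_neg]

end VecPowMul

theorem half_crbar_ck_vec_pow_general (m k ν : ℕ) (n : ℕ)
    (P : (Fin m → ℝ) → Cl m)
    (hpoly : IsPolynomialMap P)
    (hhom : ∀ (t : ℝ) (x : Fin m → ℝ), P (t • x) = t ^ (k - ν) • P x)
    (hmono : ∀ x, dirac m P x = 0)
    (y : Fin (m + 1) → ℝ) :
    (1 / 2 : ℝ) • CauchyRiemannBar m (CK m (fun x => clVec m x ^ (ν + n) * P x)) y
      = (βc (k - ν) m (ν + n) : ℝ) •
          CK m (fun x => clVec m x ^ (ν + n - 1) * P x) y :=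
  half_CauchyRiemannBar_CK_clVecPowMul hpoly.differentiable hhom hmono (ν + n) y

/-- `(1/2) ∂̄_x CK[x^{ν+n} P_{k-ν}] = β_{k-ν}(ν+n) CK[x^{ν+n-1} P_{k-ν}]`. -/
theorem half_crbar_ck_vec_pow (m k ν : ℕ) (hν : ν ≤ k) (n : ℕ) (hn : 1 ≤ n)
    (P : (Fin m → ℝ) → Cl m)
    (hpoly : IsPolynomialMap P)
    (hhom : ∀ (t : ℝ) (x : Fin m → ℝ), P (t • x) = t ^ (k - ν) • P x)
    (hmono : ∀ x, dirac m P x = 0)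
    (y : Fin (m + 1) → ℝ) :
    (1 / 2 : ℝ) • CauchyRiemannBar m (CK m (fun x => clVec m x ^ (ν + n) * P x)) y
      = (βc (k - ν) m (ν + n) : ℝ) •
          CK m (fun x => clVec m x ^ (ν + n - 1) * P x) y :=
  half_crbar_ck_vec_pow_general m k ν n P hpoly hhom hmono y
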